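/- arXiv:1502.07287 — 2 statements merged into one kernel-verified Lean document; each statement's English description precedes it below -/
import Mathlib

section
/- Let L = S ∔ I be a semisimple Leibniz algebra (S a semisimple Lie subalgebra, I the Leibniz kernel) and (ρ, λ) a representation of L on V. Then ρ(L) = ρ(S), and the pair (ρ, λ) is irreducible if and only if the restriction (−ρ)|_S : S → gl(V) is an irreducible Lie algebra representation of S. -/
/-- Derived series of a subspace `J`, used to express solvability. -/
def dsub {K L : Type*} [Field K] [AddCommGroup L] [Module K L]
    (b : L →ₗ[K] L →ₗ[K] L) (J : Submodule K L) : ℕ → Submodule K L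
  | 0 => J
  | n + 1 => Submodule.span K {z : L | ∃ a ∈ dsub b J n, ∃ c ∈ dsub b J n, z = b a c}

/-- Let `L = S ∔ I` be a semisimple Leibniz algebra (`S` a semisimple Lie
subalgebra coming from the Levi decomposition, `I` the Leibniz kernel, which is
the solvable radical) and `(ρ, λ)` a representation of `L` on `V`. Then
`ρ(L) = ρ(S)`, and `(ρ, λ)` is irreducible iff the restriction `(−ρ)|_S` is an
irreducible Lie algebra representation of `S`. -/
theorem stmt_17 {K L V : Type*} [Field K] [CharZero K] [AddCommGroup L] [Module K L]
    [FiniteDimensional K L] [AddCommGroup V] [Module K V]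
    (b : L →ₗ[K] L →ₗ[K] L)
    (hleib : ∀ x y z : L, b (b x y) z = b (b x z) y + b x (b y z))
    -- `L` is semisimple: every solvable ideal is contained in the Leibniz kernel `I`
    (hss : ∀ J : Submodule K L,
      (∀ a ∈ J, ∀ x : L, b a x ∈ J ∧ b x a ∈ J) →
      (∃ n : ℕ, dsub b J n = ⊥) →
      J ≤ Submodule.span K {a : L | ∃ z : L, a = b z z})
    -- `S` is a Lie subalgebra with `L = S ∔ I`
    (S : Submodule K L)
    (hSclosed : ∀ s ∈ S, ∀ t ∈ S, b s t ∈ S)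
    (hSlie : ∀ s ∈ S, b s s = 0)
    (hcompl : IsCompl S (Submodule.span K {a : L | ∃ z : L, a = b z z}))
    -- `(ρ, λ)` is a Leibniz representation of `L` on `V`
    (rho lam : L →ₗ[K] Module.End K V)
    (h1 : ∀ x y : L, rho (b x y) = rho y * rho x - rho x * rho y)
    (h2 : ∀ x y : L, lam (b x y) = rho y * lam x - lam x * rho y)
    (h3 : ∀ x y : L, lam (b x y) = rho y * lam x + lam x * lam y) :
    -- `ρ(L) = ρ(S)`
    Submodule.map rho ⊤ = Submodule.map rho S ∧
    -- irreducibility of `(ρ, λ)` ↔ irreducibility of the Lie representation `(−ρ)|_S`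
    ((∀ U : Submodule K V,
        (∀ x : L, ∀ m ∈ U, rho x m ∈ U ∧ lam x m ∈ U) → U = ⊥ ∨ U = ⊤) ↔
     (∀ U : Submodule K V,
        (∀ s ∈ S, ∀ m ∈ U, (-(rho s)) m ∈ U) → U = ⊥ ∨ U = ⊤)) := by
  set I : Submodule K L := Submodule.span K {a : L | ∃ z : L, a = b z z} with hI
  -- rho vanishes on I
  have hrhoI : ∀ a ∈ I, rho a = 0 := by
    intro a ha
    refine Submodule.span_induction (p := fun a _ => rho a = 0) ?_ ?_ ?_ ?_ ha
    · rintro x ⟨z, rfl⟩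
      rw [h1]; exact sub_self _
    · simp
    · intro x y _ _ hx hy; rw [map_add, hx, hy, add_zero]
    · intro c x _ hx; rw [map_smul, hx, smul_zero]
  -- every rho x equals rho s for some s ∈ S
  have hdec : ∀ x : L, ∃ s ∈ S, rho x = rho s := by
    intro x
    have hx : x ∈ S ⊔ I := by rw [hcompl.sup_eq_top]; trivial
    obtain ⟨s, hs, i, hi, rfl⟩ := Submodule.mem_sup.mp hx
    exact ⟨s, hs, by rw [map_add, hrhoI i hi, add_zero]⟩
  constructor
  · apply le_antisymm
    · rintro _ ⟨x, -, rfl⟩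
      obtain ⟨s, hs, h⟩ := hdec x
      exact ⟨s, hs, h.symm⟩
    · exact Submodule.map_mono le_top
  constructor
  · -- forward direction
    intro hirr U hU
    -- U is closed under rho s for s ∈ S, hence under all rho x
    have hUrho : ∀ x : L, ∀ m ∈ U, rho x m ∈ U := by
      intro x m hm
      obtain ⟨s, hs, h⟩ := hdec x
      rw [h]
      have := hU s hs m hm
      simpa using U.neg_mem this
    -- lam x (rho y v + lam y v) = 0
    have hkey : ∀ x y : L, ∀ v : V, lam x (rho y v + lam y v) = 0 := by
      intro x y v
      have h := (h2 x y).symm.trans (h3 x y)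
      rw [sub_eq_add_neg] at h
      have h4 : -(lam x * rho y) = lam x * lam y := add_left_cancel h
      calc lam x (rho y v + lam y v)
          = (lam x * rho y) v + (lam x * lam y) v := by
            rw [map_add]; rfl
        _ = (lam x * rho y) v + (-(lam x * rho y)) v := by rw [h4]
        _ = 0 := by rw [LinearMap.neg_apply]; exact add_neg_cancel _
    -- N = intersection of kernels of lam x is invariant
    set N : Submodule K V := ⨅ x : L, LinearMap.ker (lam x) with hN
    have hNmem : ∀ v : V, v ∈ N ↔ ∀ x : L, lam x v = 0 := by
      intro v; simp [hN, Submodule.mem_iInf, LinearMap.mem_ker]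
    have hNinv : ∀ x : L, ∀ m ∈ N, rho x m ∈ N ∧ lam x m ∈ N := by
      intro x m hm
      rw [hNmem] at hm
      constructor
      · rw [hNmem]
        intro y
        have h5 : lam y * rho x = rho x * lam y - lam (b y x) := by
          rw [h2 y x, sub_sub_cancel]
        calc lam y (rho x m) = (lam y * rho x) m := rfl
          _ = (rho x * lam y) m - (lam (b y x)) m := by rw [h5]; rfl
          _ = 0 := by
              rw [Module.End.mul_apply, hm y, hm (b y x)]; simp
      · rw [hm x]; exact N.zero_mem
    have hlamU : ∀ x : L, ∀ m ∈ U, lam x m ∈ U := by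
      rcases hirr N hNinv with hbot | htop
      · -- N = ⊥ : lam = -rho
        have hlam : ∀ y : L, ∀ v : V, lam y v = -(rho y v) := by
          intro y v
          have hmem : rho y v + lam y v ∈ N := by
            rw [hNmem]; intro x; exact hkey x y v
          rw [hbot, Submodule.mem_bot] at hmem
          exact eq_neg_of_add_eq_zero_right hmem
        intro x m hm
        rw [hlam]
        exact U.neg_mem (hUrho x m hm)
      · -- N = ⊤ : lam = 0
        intro x m hm
        have : m ∈ N := htop ▸ Submodule.mem_top
        rw [hNmem] at this
        rw [this x]
        exact U.zero_mem
    exact hirr U (fun x m hm => ⟨hUrho x m hm, hlamU x m hm⟩)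
  · intro hS U hU
    apply hS
    intro s hs m hm
    exact U.neg_mem (hU s m hm).1
end

section
/- If a Leibniz representation (ρ, λ) of a Leibniz algebra L on V decomposes as a direct sum of irreducible subrepresentations V = V_1 ⊕ … ⊕ V_k, then λ_x = 0 for every x in the Leibniz kernel I of L. -/
/-- If a Leibniz representation `(ρ, λ)` of `L` on `V` decomposes as a direct
sum of irreducible subrepresentations `V = V₁ ⊕ ⋯ ⊕ V_k`, then `λₓ = 0` for
every `x` in the Leibniz kernel `I` of `L`. -/
theorem stmt_18 {K L V : Type*} [Field K] [AddCommGroup L] [Module K L]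
    [AddCommGroup V] [Module K V]
    (b : L →ₗ[K] L →ₗ[K] L)
    (hleib : ∀ x y z : L, b (b x y) z = b (b x z) y + b x (b y z))
    (rho lam : L →ₗ[K] Module.End K V)
    (h1 : ∀ x y : L, rho (b x y) = rho y * rho x - rho x * rho y)
    (h2 : ∀ x y : L, lam (b x y) = rho y * lam x - lam x * rho y)
    (h3 : ∀ x y : L, lam (b x y) = rho y * lam x + lam x * lam y)
    (k : ℕ) (W : Fin k → Submodule K V)
    (hindep : iSupIndep W)
    (hsup : ⨆ i, W i = ⊤)
    (hne : ∀ i, W i ≠ ⊥)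
    (hinv : ∀ i, ∀ x : L, ∀ m ∈ W i, rho x m ∈ W i ∧ lam x m ∈ W i)
    (hirr : ∀ i, ∀ U : Submodule K V, U ≤ W i →
      (∀ x : L, ∀ m ∈ U, rho x m ∈ U ∧ lam x m ∈ U) → U = ⊥ ∨ U = W i) :
    ∀ x ∈ Submodule.span K {a : L | ∃ z : L, a = b z z}, lam x = 0 := by
  -- Key identity: λx (ρy + λy) = 0
  have key : ∀ x y : L, lam x * rho y + lam x * lam y = 0 := by
    intro x y
    have := (h2 x y).symm.trans (h3 x y)
    have h := sub_eq_zero.mpr this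
    -- (ρy λx - λx ρy) - (ρy λx + λx λy) = 0 gives the claim
    linear_combination (norm := noncomm_ring) -this
  -- On each W i, λ of a square vanishes
  have sq : ∀ z : L, ∀ i, ∀ m ∈ W i, lam (b z z) m = 0 := by
    intro z i m hm
    -- U = W i ∩ ⋂ₓ ker (λ x)
    set U : Submodule K V := W i ⊓ ⨅ x : L, LinearMap.ker (lam x) with hU
    have hUle : U ≤ W i := inf_le_left
    have hUmem : ∀ v, v ∈ U ↔ v ∈ W i ∧ ∀ x : L, lam x v = 0 := by
      intro v
      simp [hU, Submodule.mem_iInf, LinearMap.mem_ker]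
    have hUinv : ∀ x : L, ∀ v ∈ U, rho x v ∈ U ∧ lam x v ∈ U := by
      intro x v hv
      rw [hUmem] at hv
      obtain ⟨hvW, hvk⟩ := hv
      constructor
      · rw [hUmem]
        refine ⟨(hinv i x v hvW).1, fun y => ?_⟩
        have h := congrArg (fun f : Module.End K V => f v) (h2 y x)
        simp only [Module.End.mul_apply, LinearMap.sub_apply, hvk] at h
        simpa [hvk] using h.symm
      · rw [hUmem]
        rw [hvk x]
        exact ⟨Submodule.zero_mem _, fun y => by simp⟩
    rcases hirr i U hUle hUinv with hbot | htop
    · -- U = ⊥ : then λ = −ρ on W i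
      have hlr : ∀ y : L, ∀ v ∈ W i, lam y v = - rho y v := by
        intro y v hv
        have hmem : rho y v + lam y v ∈ U := by
          rw [hUmem]
          refine ⟨Submodule.add_mem _ (hinv i y v hv).1 (hinv i y v hv).2, fun x => ?_⟩
          have := congrArg (fun f : Module.End K V => f v) (key x y)
          simpa [Module.End.mul_apply, map_add] using this
        rw [hbot, Submodule.mem_bot] at hmem
        linear_combination (norm := module) hmem
      have h3' := congrArg (fun f : Module.End K V => f m) (h3 z z)
      simp only [Module.End.mul_apply, LinearMap.add_apply] at h3'
      have hlm : lam z m = - rho z m := hlr z m hm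
      have hlmW : lam z m ∈ W i := (hinv i z m hm).2
      rw [h3', hlr z (lam z m) hlmW]
      abel
    · -- U = W i : λ = 0 on W i
      have hm' : m ∈ U := htop ▸ hm
      rw [hUmem] at hm'
      exact hm'.2 (b z z)
  -- hence λ of a square is 0 on all of V
  have sq0 : ∀ z : L, lam (b z z) = 0 := by
    intro z
    ext v
    have hv : v ∈ ⨆ i, W i := hsup ▸ Submodule.mem_top
    induction hv using Submodule.iSup_induction' with
    | mem i m hm => simpa using sq z i m hm
    | zero => simp
    | add x hx y hy hx' hy' => simp [map_add, hx', hy']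
  -- span argument
  intro x hx
  have : Submodule.span K {a : L | ∃ z : L, a = b z z} ≤ LinearMap.ker lam := by
    rw [Submodule.span_le]
    rintro a ⟨z, rfl⟩
    exact sq0 z
  exact this hx
end
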